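/- arXiv:2008.03524 — 3 statements merged into one kernel-verified Lean document; each statement's English description precedes it below -/
import Mathlib

section
/- For every nonnegative integer n and complex t with |t| < 1, the regularized Gauss hypergeometric function satisfies ₂F̃₁(1/2, 1; 1 - n; t) = ((1/2)_n / √(1-t)) · (t/(1-t))^n. -/
open scoped BigOperators

/-- Pochhammer symbol `(a)_k` on `ℂ`. -/
noncomputable def pochC (a : ℂ) (k : ℕ) : ℂ := ∏ i ∈ Finset.range k, (a + i)

/-- Regularized Gauss hypergeometric function `₂F̃₁(a,b;c;z) = ∑ (a)_k (b)_k / Γ(c+k) · z^k/k!`. -/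
noncomputable def hyp2F1reg (a b c z : ℂ) : ℂ :=
  ∑' k : ℕ, pochC a k * pochC b k / (Complex.Gamma (c + k) * (k.factorial : ℂ)) * z ^ k

/-!
Since `1 / Γ(1 - n + k)` vanishes for `k < n`, the series of `₂F̃₁(a, 1; 1 - n; z)` starts at
`k = n`. Writing `k = n + m`, the Gamma factor becomes `m!` and `(1)_k = k!` cancels the `k!`, so
the series is `(a)_n zⁿ ∑ (a + n)_m zᵐ / m!`, the binomial series of `(1 - z)^(-(a + n))`.
-/

theorem pochC_eq_ascPochhammer_eval (a : ℂ) (k : ℕ) :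
    pochC a k = (ascPochhammer ℂ k).eval a := by
  induction k with
  | zero => simp [pochC]
  | succ k ih => rw [pochC, Finset.prod_range_succ, ← pochC, ih, ascPochhammer_succ_eval]

theorem pochC_add (a : ℂ) (m n : ℕ) : pochC a (m + n) = pochC a m * pochC (a + m) n := by
  simp only [pochC, Finset.prod_range_add, Nat.cast_add, add_assoc]

theorem pochC_one (k : ℕ) : pochC 1 k = k.factorial := by
  rw [pochC_eq_ascPochhammer_eval, Nat.cast_factorial]

theorem ring_choose_eq_pochC_div_factorial (a : ℂ) (k : ℕ) :
    Ring.choose (a + k - 1) k = pochC a k / k.factorial := by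
  rw [← Ring.multichoose_eq, eq_div_iff (Nat.cast_ne_zero.mpr k.factorial_ne_zero), mul_comm,
    ← nsmul_eq_mul, Ring.factorial_nsmul_multichoose_eq_ascPochhammer,
    Polynomial.ascPochhammer_smeval_eq_eval, pochC_eq_ascPochhammer_eval]

theorem hasSum_pochC_div_factorial_mul_pow (a : ℂ) {z : ℂ} (hz : ‖z‖ < 1) :
    HasSum (fun k : ℕ => pochC a k / k.factorial * z ^ k) (1 / (1 - z) ^ a) := by
  have := (Complex.one_div_one_sub_cpow_hasFPowerSeriesOnBall_zero a).hasSum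
    (y := z) (by simpa [← ofReal_norm, ENNReal.ofReal_lt_one] using hz)
  simpa [FormalMultilinearSeries.ofScalars_apply_eq, ring_choose_eq_pochC_div_factorial, mul_comm]
    using this

theorem hyp2F1reg_one_one_sub_nat (a : ℂ) (n : ℕ) {z : ℂ} (hz : ‖z‖ < 1) :
    hyp2F1reg a 1 (1 - n) z = pochC a n * z ^ n / (1 - z) ^ (a + n) := by
  set f : ℕ → ℂ := fun k =>
    pochC a k * pochC 1 k / (Complex.Gamma (1 - n + k) * k.factorial) * z ^ k
  have hf_lt : ∀ k < n, f k = 0 := by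
    intro k hk
    obtain ⟨j, rfl⟩ := Nat.exists_eq_add_of_lt hk
    have hc : (1 - ↑(k + j + 1) + k : ℂ) = -j := by push_cast; ring
    simp only [f, hc, Complex.Gamma_neg_nat_eq_zero, zero_mul, div_zero]
  have hf_add : ∀ m, f (m + n) = pochC a n * z ^ n * (pochC (a + n) m / m.factorial * z ^ m) := by
    intro m
    have hc : (1 - n + ↑(m + n) : ℂ) = m + 1 := by push_cast; ring
    have hfac : ((n + m).factorial : ℂ) ≠ 0 := Nat.cast_ne_zero.mpr (n + m).factorial_ne_zero
    simp only [f]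
    rw [hc, Complex.Gamma_nat_eq_factorial, pochC_one, add_comm m n, pochC_add, pow_add]
    field_simp
  have hsum : HasSum (fun m => f (m + n)) (pochC a n * z ^ n * (1 / (1 - z) ^ (a + n))) := by
    simpa only [hf_add] using (hasSum_pochC_div_factorial_mul_pow (a + n) hz).mul_left _
  have hlow : ∑ k ∈ Finset.range n, f k = 0 :=
    Finset.sum_eq_zero fun k hk => hf_lt k (Finset.mem_range.mp hk)
  rw [← sub_zero (_ * _ * _), ← hlow, hasSum_nat_add_iff'] at hsum
  rw [hyp2F1reg, hsum.tsum_eq, mul_one_div]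

theorem reg_reduction_second_diff (n : ℕ) (t : ℂ) (ht : ‖t‖ < 1) :
    hyp2F1reg (1/2) 1 (1 - n) t =
      pochC (1/2) n / (1 - t) ^ ((1 : ℂ)/2) * (t / (1 - t)) ^ n := by
  have h1t : 1 - t ≠ 0 := sub_ne_zero.mpr fun h => by simp [← h] at ht
  rw [hyp2F1reg_one_one_sub_nat _ n ht, Complex.cpow_add _ _ h1t, Complex.cpow_natCast, div_pow]
  ring
end

section
/- For every integer n ≥ 1 and complex t with |t| < 1, the regularized hypergeometric function satisfies ₂F̃₁(1/2 - n, 1 - n; 2 - n; t) = 2 (1/2)_n · t^{n-1}. -/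
/-! Since `1 - n = -(n - 1)`, the Pochhammer factor `(1 - n)_k` kills every term with `k ≥ n`, while
for `k < n - 1` the term vanishes because `2 - n + k` is a pole of `Γ` (Lean's `Γ` is `0` there, so
the quotient is `0`, matching `1/Γ = 0`). Only `k = n - 1` survives, with `Γ(1) = 1`, and the
reflection `(a - m)_m = (-1)^m (1 - a)_m` turns its coefficient into `(3/2)_{n-1} = 2 (1/2)_n`. -/

open scoped BigOperators

lemma pochC_succ (a : ℂ) (k : ℕ) : pochC a (k + 1) = pochC a k * (a + k) :=
  Finset.prod_range_succ _ _

lemma pochC_succ' (a : ℂ) (k : ℕ) : pochC a (k + 1) = a * pochC (a + 1) k := by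
  rw [pochC, Finset.prod_range_succ', Nat.cast_zero, add_zero, mul_comm, pochC]
  congr 1
  refine Finset.prod_congr rfl fun i _ => ?_
  push_cast
  ring

lemma pochC_sub_nat (a : ℂ) (m : ℕ) : pochC (a - m) m = (-1) ^ m * pochC (1 - a) m := by
  induction m with
  | zero => simp [pochC]
  | succ m ih =>
    rw [pochC_succ', pochC_succ, show a - ↑(m + 1) + 1 = a - m by push_cast; ring, ih]
    push_cast
    ring

lemma pochC_neg_nat_self (m : ℕ) : pochC (-m) m = (-1) ^ m * m.factorial := by
  have h := pochC_sub_nat 0 m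
  rw [zero_sub, sub_zero] at h
  rw [h, ← Finset.prod_range_add_one_eq_factorial, Nat.cast_prod, pochC]
  push_cast
  simp only [add_comm]

lemma pochC_neg_nat_eq_zero {m k : ℕ} (h : m < k) : pochC (-m) k = 0 :=
  Finset.prod_eq_zero (Finset.mem_range.mpr h) (neg_add_cancel _)

lemma hyp2F1reg_neg_nat_one_sub (a z : ℂ) (m : ℕ) :
    hyp2F1reg a (-m) (1 - m) z = (-1) ^ m * pochC a m * z ^ m := by
  rw [hyp2F1reg, tsum_eq_single m]
  · have hf : (m.factorial : ℂ) ≠ 0 := Nat.cast_ne_zero.mpr m.factorial_ne_zero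
    rw [sub_add_cancel, Complex.Gamma_one, one_mul, pochC_neg_nat_self]
    field_simp
  · intro k hk
    rcases lt_or_gt_of_ne hk with hlt | hgt
    · have hpole : 1 - (m : ℂ) + k = -((m - (k + 1) : ℕ) : ℂ) := by
        push_cast [Nat.cast_sub hlt]
        ring
      rw [hpole, Complex.Gamma_neg_nat_eq_zero, zero_mul, div_zero, zero_mul]
    · rw [pochC_neg_nat_eq_zero hgt, mul_zero, zero_div, zero_mul]

theorem reg_reduction_fourth_diff_general (n : ℕ) (hn : 1 ≤ n) (t : ℂ) :
    hyp2F1reg (1/2 - n) (1 - n) (2 - n) t = 2 * pochC (1/2) n * t ^ (n - 1) := by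
  obtain ⟨m, rfl⟩ := Nat.exists_eq_add_of_le' hn
  have ha : (1 / 2 : ℂ) - ↑(m + 1) = -1 / 2 - m := by push_cast; ring
  have hb : (1 : ℂ) - ↑(m + 1) = -m := by push_cast; ring
  have hc : (2 : ℂ) - ↑(m + 1) = 1 - m := by push_cast; ring
  rw [ha, hb, hc, hyp2F1reg_neg_nat_one_sub, pochC_sub_nat, pochC_succ', Nat.add_sub_cancel,
    show (1 : ℂ) - -1 / 2 = 1 / 2 + 1 by norm_num]
  have hsign : ((-1 : ℂ) ^ m) ^ 2 = 1 := by rw [← pow_mul, mul_comm, pow_mul]; norm_num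
  linear_combination (pochC (1 / 2 + 1) m * t ^ m) * hsign

theorem reg_reduction_fourth_diff (n : ℕ) (hn : 1 ≤ n) (t : ℂ) (ht : ‖t‖ < 1) :
    hyp2F1reg (1/2 - n) (1 - n) (2 - n) t = 2 * pochC (1/2) n * t ^ (n - 1) :=
  reg_reduction_fourth_diff_general n hn t
end

section
/- For real z with 0 < z < 1: ₂F₁(1/3, 2/3; 1/2; z) = cos((1/3) arcsin(√z)) / √(1-z). -/
open scoped BigOperators

/-- Pochhammer symbol `(a)_k` on `ℝ`. -/
noncomputable def pochR (a : ℝ) (k : ℕ) : ℝ := ∏ i ∈ Finset.range k, (a + i)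

/-- Gauss hypergeometric series `₂F₁(a,b;c;z)` on `ℝ`. -/
noncomputable def hyp2F1R (a b c z : ℝ) : ℝ :=
  ∑' k : ℕ, pochR a k * pochR b k / (pochR c k * (k.factorial : ℝ)) * z ^ k

/-!
Put `y(θ) = F(sin² θ) cos θ` with `F = ₂F₁(a, 1 - a; 1/2; ·)`. The hypergeometric equation
`x(1 - x)F'' + (1/2 - 2x)F' - a(1 - a)F = 0`, read at `x = sin² θ`, becomes the oscillator
equation `y'' = -(1 - 2a)² y`, and `y(0) = 1`, `y'(0) = 0`. Conservation of energy then forces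
`y(θ) = cos((1 - 2a)θ)` on `(-π/2, π/2)`; take `a = 1/3` and `θ = arcsin √z`.
The equation for `F` comes from termwise differentiation, legitimate because for `0 ≤ a ≤ 1` the
coefficients lie in `[0, 1]`, together with the two-term recurrence of the coefficients.
-/

open Real Set Metric

noncomputable def powerSeriesSum (c : ℕ → ℝ) (x : ℝ) : ℝ := ∑' k, c k * x ^ k

lemma powerSeriesSum_zero (c : ℕ → ℝ) : powerSeriesSum c 0 = c 0 := by
  rw [powerSeriesSum, tsum_eq_single 0 fun k hk => by simp [hk]]
  simp

def derivCoeff (c : ℕ → ℝ) (k : ℕ) : ℝ := (k + 1) * c (k + 1)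

def HasPolyGrowth (c : ℕ → ℝ) : Prop := ∃ (C : ℝ) (m : ℕ), ∀ k, |c k| ≤ C * ((k : ℝ) + 1) ^ m

lemma summable_succ_pow_mul_geometric (m : ℕ) {r : ℝ} (hr : |r| < 1) :
    Summable fun k : ℕ => ((k : ℝ) + 1) ^ m * r ^ k := by
  simp_rw [add_pow, one_pow, mul_one, Finset.sum_mul]
  refine summable_sum fun i _ => ?_
  simpa [mul_right_comm] using
    (summable_pow_mul_geometric_of_norm_lt_one i (r := r) hr).mul_right (m.choose i : ℝ)

namespace HasPolyGrowth

variable {c : ℕ → ℝ}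

lemma summable_mul_pow (hc : HasPolyGrowth c) {x : ℝ} (hx : |x| < 1) :
    Summable fun k => c k * x ^ k := by
  obtain ⟨C, m, hC⟩ := hc
  refine .of_norm_bounded ((summable_succ_pow_mul_geometric m (by rwa [abs_abs])).mul_left C)
    fun k => ?_
  rw [norm_mul, norm_pow, Real.norm_eq_abs, Real.norm_eq_abs, ← mul_assoc]
  exact mul_le_mul_of_nonneg_right (hC k) (by positivity)

lemma derivCoeff (hc : HasPolyGrowth c) : HasPolyGrowth (_root_.derivCoeff c) := by
  obtain ⟨C, m, hC⟩ := hc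
  refine ⟨2 ^ m * C, m + 1, fun k => ?_⟩
  have hk : (0 : ℝ) ≤ k := k.cast_nonneg
  have h2 : ((k : ℝ) + 2) ^ m ≤ 2 ^ m * ((k : ℝ) + 1) ^ m := by
    rw [← mul_pow]; gcongr; linarith
  have hC0 : 0 ≤ C := le_trans (abs_nonneg _) ((hC 0).trans (by simp))
  calc |_root_.derivCoeff c k| = ((k : ℝ) + 1) * |c (k + 1)| := by
        rw [_root_.derivCoeff, abs_mul, abs_of_nonneg (by positivity)]
    _ ≤ ((k : ℝ) + 1) * (C * ((k : ℝ) + 2) ^ m) := by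
        gcongr; exact (hC (k + 1)).trans_eq (by push_cast; ring)
    _ ≤ ((k : ℝ) + 1) * (C * (2 ^ m * ((k : ℝ) + 1) ^ m)) := by gcongr
    _ = 2 ^ m * C * ((k : ℝ) + 1) ^ (m + 1) := by ring

end HasPolyGrowth

open Filter Topology in
lemma hasDerivAt_powerSeriesSum {c : ℕ → ℝ} (hc : HasPolyGrowth c) {x : ℝ}
    (hx : |x| < 1) : HasDerivAt (powerSeriesSum c) (powerSeriesSum (derivCoeff c) x) x := by
  obtain ⟨r, hxr, hr1⟩ := exists_between hx
  have hr0 : 0 < r := (abs_nonneg x).trans_lt hxr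
  have hr : |r| < 1 := by rwa [abs_of_pos hr0]
  obtain ⟨C, m, hC⟩ := hc.derivCoeff
  -- without its constant term the series differentiates termwise to `derivCoeff c k * y ^ k`,
  -- with no index shift
  have htail : HasDerivAt (fun y => ∑' k, c (k + 1) * y ^ (k + 1))
      (powerSeriesSum (derivCoeff c) x) x := by
    rw [powerSeriesSum]
    refine hasDerivAt_tsum_of_isPreconnected (g := fun k y => c (k + 1) * y ^ (k + 1))
      (g' := fun k y => derivCoeff c k * y ^ k)
      ((summable_succ_pow_mul_geometric m hr).mul_left C)
      isOpen_ball (convex_ball (0 : ℝ) r).isPreconnected (fun k y _ => ?_) (fun k y hy => ?_)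
      (mem_ball_self hr0) (by simp) (by simpa using hxr)
    · refine ((hasDerivAt_pow (k + 1) y).const_mul (c (k + 1))).congr_deriv ?_
      simp only [derivCoeff, Nat.cast_add, Nat.cast_one, add_tsub_cancel_right]
      ring
    · have hy' : |y| ≤ r := by simpa using (mem_ball_zero_iff.mp hy).le
      rw [norm_mul, norm_pow, Real.norm_eq_abs, Real.norm_eq_abs, ← mul_assoc]
      exact mul_le_mul (hC k) (pow_le_pow_left₀ (abs_nonneg y) hy' k) (by positivity)
        ((abs_nonneg _).trans (hC k))
  have hsplit : powerSeriesSum c =ᶠ[𝓝 x] fun y => c 0 + ∑' k, c (k + 1) * y ^ (k + 1) := by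
    filter_upwards [isOpen_lt continuous_abs continuous_const |>.mem_nhds hx] with y hy
    rw [powerSeriesSum]
    simpa using (hc.summable_mul_pow hy).tsum_eq_zero_add
  exact (htail.const_add (c 0)).congr_of_eventuallyEq hsplit

lemma hasSum_natCast_mul_mul_pow {e : ℕ → ℝ} {x s : ℝ}
    (h : HasSum (fun k => derivCoeff e k * x ^ k) s) :
    HasSum (fun k => k * e k * x ^ k) (x * s) := by
  have hshift := h.mul_left x
  have hterm : (fun k => x * (derivCoeff e k * x ^ k))
      = fun k : ℕ => ((k + 1 : ℕ) : ℝ) * e (k + 1) * x ^ (k + 1) := by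
    funext k
    simp only [derivCoeff, Nat.cast_add, Nat.cast_one, pow_succ]
    ring
  rw [hterm] at hshift
  simpa using (hasSum_nat_add_iff (f := fun k : ℕ => (k : ℝ) * e k * x ^ k) 1).mp hshift

theorem powerSeriesSum_hypergeometric_ode {α β γ : ℝ} {c : ℕ → ℝ} (hc : HasPolyGrowth c)
    (hrec : ∀ k : ℕ, (k + 1) * (γ + k) * c (k + 1) = (α + k) * (β + k) * c k)
    {x : ℝ} (hx : |x| < 1) :
    x * (1 - x) * powerSeriesSum (derivCoeff (derivCoeff c)) x
      + (γ - (α + β + 1) * x) * powerSeriesSum (derivCoeff c) x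
      - α * β * powerSeriesSum c x = 0 := by
  unfold powerSeriesSum
  have hU := (hc.summable_mul_pow hx).hasSum
  have hV := (hc.derivCoeff.summable_mul_pow hx).hasSum
  have hW := (hc.derivCoeff.derivCoeff.summable_mul_pow hx).hasSum
  have hxV := hasSum_natCast_mul_mul_pow hV
  have hxW := hasSum_natCast_mul_mul_pow hW
  have hxxW := hasSum_natCast_mul_mul_pow (e := fun k => (k - 1) * c k) (x := x) <| by
    convert hxW using 2 with k
    simp only [derivCoeff, Nat.cast_add, Nat.cast_one]; ring
  have hsum := (((hxW.sub hxxW).add (hV.mul_left γ)).sub (hxV.mul_left (α + β + 1))).sub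
    (hU.mul_left (α * β))
  have hzero : ∀ k : ℕ, k * derivCoeff c k * x ^ k - k * ((k - 1) * c k) * x ^ k
      + γ * (derivCoeff c k * x ^ k) - (α + β + 1) * (k * c k * x ^ k)
      - α * β * (c k * x ^ k) = 0 := fun k => by
    simp only [derivCoeff]; linear_combination x ^ k * hrec k
  simp only [hzero] at hsum
  linear_combination hsum.unique hasSum_zero

section Coefficients

variable {a b c : ℝ}

lemma pochR_zero (a : ℝ) : pochR a 0 = 1 := Finset.prod_range_zero _

lemma pochR_succ (a : ℝ) (k : ℕ) : pochR a (k + 1) = pochR a k * (a + k) :=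
  Finset.prod_range_succ _ _

lemma pochR_nonneg (ha : 0 ≤ a) (k : ℕ) : 0 ≤ pochR a k :=
  Finset.prod_nonneg fun _ _ => by positivity

lemma pochR_pos (ha : 0 < a) (k : ℕ) : 0 < pochR a k :=
  Finset.prod_pos fun _ _ => by positivity

noncomputable def hyp2F1Coeff (a b c : ℝ) (k : ℕ) : ℝ :=
  pochR a k * pochR b k / (pochR c k * (k.factorial : ℝ))

lemma hyp2F1R_eq_powerSeriesSum (a b c z : ℝ) :
    hyp2F1R a b c z = powerSeriesSum (hyp2F1Coeff a b c) z := rfl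

lemma hyp2F1Coeff_zero (a b c : ℝ) : hyp2F1Coeff a b c 0 = 1 := by
  simp [hyp2F1Coeff, pochR_zero]

lemma hyp2F1Coeff_succ (hc : 0 < c) (k : ℕ) :
    (k + 1) * (c + k) * hyp2F1Coeff a b c (k + 1) = (a + k) * (b + k) * hyp2F1Coeff a b c k := by
  have := (pochR_pos hc k).ne'
  have : c + k ≠ 0 := by positivity
  simp only [hyp2F1Coeff, pochR_succ, Nat.factorial_succ, Nat.cast_mul, Nat.cast_succ]
  field_simp

lemma hyp2F1Coeff_nonneg (ha : 0 ≤ a) (hb : 0 ≤ b) (hc : 0 < c) (k : ℕ) :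
    0 ≤ hyp2F1Coeff a b c k :=
  div_nonneg (mul_nonneg (pochR_nonneg ha k) (pochR_nonneg hb k))
    (mul_pos (pochR_pos hc k) (by positivity)).le

lemma hyp2F1Coeff_le_one (ha : 0 ≤ a) (hb : 0 ≤ b) (hc : 0 < c) (hab : a * b ≤ c)
    (hab' : a + b ≤ c + 1) (k : ℕ) : hyp2F1Coeff a b c k ≤ 1 := by
  induction k with
  | zero => rw [hyp2F1Coeff_zero]
  | succ k ih =>
    have hk : (0 : ℝ) ≤ k := k.cast_nonneg
    refine le_of_mul_le_mul_left ?_ (by positivity : (0 : ℝ) < (k + 1) * (c + k))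
    calc (k + 1) * (c + k) * hyp2F1Coeff a b c (k + 1)
        = (a + k) * (b + k) * hyp2F1Coeff a b c k := hyp2F1Coeff_succ hc k
      _ ≤ (a + k) * (b + k) * 1 := by gcongr
      _ ≤ (k + 1) * (c + k) * 1 := by nlinarith

lemma hasPolyGrowth_hyp2F1Coeff (ha : 0 ≤ a) (hb : 0 ≤ b) (hc : 0 < c) (hab : a * b ≤ c)
    (hab' : a + b ≤ c + 1) : HasPolyGrowth (hyp2F1Coeff a b c) :=
  ⟨1, 0, fun k => by
    simpa [abs_of_nonneg (hyp2F1Coeff_nonneg ha hb hc k)] using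
      hyp2F1Coeff_le_one ha hb hc hab hab' k⟩

end Coefficients

lemma IsOpen.eq_of_hasDerivAt_zero {𝕜 G : Type*} [RCLike 𝕜] [NormedAddCommGroup G]
    [NormedSpace 𝕜 G] {s : Set 𝕜} (hs : IsOpen s) (hs' : IsPreconnected s) {g : 𝕜 → G}
    (hg : ∀ t ∈ s, HasDerivAt g 0 t) {x y : 𝕜} (hx : x ∈ s) (hy : y ∈ s) : g x = g y :=
  hs.is_const_of_deriv_eq_zero hs' (fun t ht => (hg t ht).differentiableAt.differentiableWithinAt)
    (fun t ht => (hg t ht).deriv) hx hy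

theorem eqOn_cos_of_hasDerivAt {s : Set ℝ} (hs : IsOpen s) (hs' : IsPreconnected s)
    (h0 : 0 ∈ s) {ω : ℝ} {f f' : ℝ → ℝ} (hf : ∀ t ∈ s, HasDerivAt f (f' t) t)
    (hf' : ∀ t ∈ s, HasDerivAt f' (-ω ^ 2 * f t) t) (hf0 : f 0 = 1) (hf'0 : f' 0 = 0) :
    EqOn f (fun t => cos (ω * t)) s := by
  set g : ℝ → ℝ := fun t => f t - cos (ω * t)
  set g' : ℝ → ℝ := fun t => f' t + ω * sin (ω * t)
  have hlin (t : ℝ) : HasDerivAt (fun t => ω * t) ω t := by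
    simpa using (hasDerivAt_id t).const_mul ω
  have hg (t) (ht : t ∈ s) : HasDerivAt g (g' t) t :=
    ((hf t ht).sub ((hasDerivAt_cos _).comp t (hlin t))).congr_deriv (by simp [g']; ring)
  have hg' (t) (ht : t ∈ s) : HasDerivAt g' (-ω ^ 2 * g t) t :=
    ((hf' t ht).add (((hasDerivAt_sin _).comp t (hlin t)).const_mul ω)).congr_deriv
      (by simp [g]; ring)
  -- the energy `g' ^ 2 + ω ^ 2 * g ^ 2` is conserved and vanishes at `0`
  have hE : ∀ t ∈ s, g' t ^ 2 + ω ^ 2 * g t ^ 2 = 0 := fun t ht => by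
    have := hs.eq_of_hasDerivAt_zero hs' (g := fun t => g' t ^ 2 + ω ^ 2 * g t ^ 2)
      (fun u hu => (((hg' u hu).pow 2).add (((hg u hu).pow 2).const_mul _)).congr_deriv
        (by ring)) ht h0
    simpa [g, g', hf0, hf'0] using this
  have hg'0 : ∀ t ∈ s, HasDerivAt g 0 t := fun t ht => by
    have : g' t = 0 := by nlinarith [hE t ht, sq_nonneg (ω * g t)]
    simpa [this] using hg t ht
  intro t ht
  have := hs.eq_of_hasDerivAt_zero hs' hg'0 ht h0
  simpa [g, hf0, sub_eq_zero] using this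

lemma abs_sin_sq_lt_one {θ : ℝ} (hθ : θ ∈ Ioo (-(π / 2)) (π / 2)) : |sin θ ^ 2| < 1 := by
  have := cos_pos_of_mem_Ioo hθ
  rw [abs_of_nonneg (sq_nonneg _)]
  nlinarith [sin_sq_add_cos_sq θ]

lemma hasDerivAt_comp_sin_sq {G G' : ℝ → ℝ} {θ : ℝ}
    (h : HasDerivAt G (G' (sin θ ^ 2)) (sin θ ^ 2)) :
    HasDerivAt (fun t => G (sin t ^ 2)) (G' (sin θ ^ 2) * (2 * sin θ * cos θ)) θ :=
  h.comp θ (by simpa using (hasDerivAt_sin θ).fun_pow 2)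

theorem comp_sin_sq_mul_cos_eq_cos {a : ℝ} {F F' F'' : ℝ → ℝ}
    (hF : ∀ x, |x| < 1 → HasDerivAt F (F' x) x) (hF' : ∀ x, |x| < 1 → HasDerivAt F' (F'' x) x)
    (hode : ∀ x, |x| < 1 → x * (1 - x) * F'' x + (1 / 2 - 2 * x) * F' x - a * (1 - a) * F x = 0)
    (hF0 : F 0 = 1) {θ : ℝ} (hθ : θ ∈ Ioo (-(π / 2)) (π / 2)) :
    F (sin θ ^ 2) * cos θ = cos ((1 - 2 * a) * θ) := by
  refine eqOn_cos_of_hasDerivAt isOpen_Ioo isPreconnected_Ioo (by simp [pi_pos])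
    (f := fun t => F (sin t ^ 2) * cos t)
    (f' := fun t => 2 * sin t * cos t ^ 2 * F' (sin t ^ 2) - sin t * F (sin t ^ 2))
    (fun t ht => ?_) (fun t ht => ?_) (by simp [hF0]) (by simp) hθ
  · have hx := abs_sin_sq_lt_one ht
    exact ((hasDerivAt_comp_sin_sq (hF _ hx)).mul (hasDerivAt_cos t)).congr_deriv (by ring)
  · have hx := abs_sin_sq_lt_one ht
    have hsc : HasDerivAt (fun t => 2 * sin t * cos t ^ 2)
        (2 * cos t * cos t ^ 2 + 2 * sin t * (2 * cos t * -sin t)) t := by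
      simpa using ((hasDerivAt_sin t).const_mul 2).fun_mul ((hasDerivAt_cos t).fun_pow 2)
    refine ((hsc.mul (hasDerivAt_comp_sin_sq (hF' _ hx))).sub
      ((hasDerivAt_sin t).mul (hasDerivAt_comp_sin_sq (hF _ hx)))).congr_deriv ?_
    linear_combination (4 * cos t) * hode _ hx
      + (4 * sin t ^ 2 * cos t * F'' (sin t ^ 2) + 2 * cos t * F' (sin t ^ 2)) * sin_sq_add_cos_sq t

theorem hyp2F1R_sin_sq_mul_cos {a : ℝ} (ha0 : 0 ≤ a) (ha1 : a ≤ 1) {θ : ℝ}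
    (hθ : θ ∈ Ioo (-(π / 2)) (π / 2)) :
    hyp2F1R a (1 - a) (1 / 2) (sin θ ^ 2) * cos θ = cos ((1 - 2 * a) * θ) := by
  have hc : HasPolyGrowth (hyp2F1Coeff a (1 - a) (1 / 2)) :=
    hasPolyGrowth_hyp2F1Coeff ha0 (by linarith) (by norm_num) (by nlinarith) (by linarith)
  rw [hyp2F1R_eq_powerSeriesSum]
  refine comp_sin_sq_mul_cos_eq_cos (fun x hx => hasDerivAt_powerSeriesSum hc hx)
    (fun x hx => hasDerivAt_powerSeriesSum hc.derivCoeff hx) (fun x hx => ?_)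
    (by rw [powerSeriesSum_zero, hyp2F1Coeff_zero]) hθ
  linear_combination
    powerSeriesSum_hypergeometric_ode hc (fun k => hyp2F1Coeff_succ (by norm_num) k) hx

theorem hyp2F1_third_twothirds_half (z : ℝ) (hz0 : 0 < z) (hz1 : z < 1) :
    hyp2F1R (1/3) (2/3) (1/2) z =
      Real.cos ((1/3) * Real.arcsin (Real.sqrt z)) / Real.sqrt (1 - z) := by
  have hsqrt : sqrt z < 1 := (sqrt_lt' one_pos).mpr (by simpa using hz1)
  set θ := arcsin (sqrt z)
  have hθ : θ ∈ Ioo (-(π / 2)) (π / 2) :=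
    ⟨(neg_lt_zero.mpr (by positivity)).trans_le (arcsin_nonneg.mpr (sqrt_nonneg z)),
      arcsin_lt_pi_div_two.mpr hsqrt⟩
  have hsin : sin θ ^ 2 = z := by
    rw [sin_arcsin (by linarith [sqrt_nonneg z]) hsqrt.le, sq_sqrt hz0.le]
  have hcos : cos θ = sqrt (1 - z) := by rw [cos_arcsin, sq_sqrt hz0.le]
  have key := hyp2F1R_sin_sq_mul_cos (a := 1 / 3) (by norm_num) (by norm_num) hθ
  rw [hsin, hcos] at key
  norm_num at key
  rw [eq_div_iff (sqrt_pos.mpr (by linarith)).ne']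
  exact key
end
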